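/- arXiv:1702.08351 — 5 statements merged into one kernel-verified Lean document; each statement's English description precedes it below -/
import Mathlib

section
/- The commutator subgroup of Λ(n,m;r) equals the cyclic subgroup generated by α^{r−1}. -/
/-- Relations of the metacyclic group Λ(n,m;r) = ⟨α,β | αⁿ = βᵐ = 1, βαβ⁻¹ = αʳ⟩. -/
def metacyclicRels (n m r : ℕ) : Set (FreeGroup (Fin 2)) :=
  { FreeGroup.of 0 ^ n, FreeGroup.of 1 ^ m,
    FreeGroup.of 1 * FreeGroup.of 0 * (FreeGroup.of 1)⁻¹ * (FreeGroup.of 0 ^ r)⁻¹ }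

/-- The split metacyclic group Λ(n,m;r). -/
abbrev Lam (n m r : ℕ) := PresentedGroup (metacyclicRels n m r)

def lamAlpha (n m r : ℕ) : Lam n m r := PresentedGroup.of 0
def lamBeta (n m r : ℕ) : Lam n m r := PresentedGroup.of 1

/-!
The commutator `⁅β, α⁆ = βαβ⁻¹α⁻¹ = α ^ (r - 1)` lies in the commutator subgroup. Conversely,
`⟨α ^ (r - 1)⟩` is normal: `α` centralises it, `β` conjugates `α ^ (r - 1)` to its `r`-th power,
and `β⁻¹ = β ^ (m - 1)` conjugates it to its `r ^ (m - 1)`-th power. Modulo this normal subgroup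
the generators `α` and `β` commute, so the quotient is abelian.
-/

open Subgroup
open scoped commutatorElement

namespace Subgroup

variable {G : Type*} [Group G]

theorem conj_mem_closure_singleton {g x y : G} (hg : g * x * g⁻¹ ∈ closure {x})
    (hy : y ∈ closure {x}) : g * y * g⁻¹ ∈ closure {x} := by
  obtain ⟨k, rfl⟩ := mem_closure_singleton.mp hy
  rw [← conj_zpow]
  exact zpow_mem hg k

theorem mem_normalizer_closure_singleton {g x : G} (h₁ : g * x * g⁻¹ ∈ closure {x})
    (h₂ : g⁻¹ * x * g ∈ closure {x}) : g ∈ normalizer (closure {x} : Set G) := by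
  refine mem_normalizer_iff.mpr fun y => ⟨conj_mem_closure_singleton h₁, fun hy => ?_⟩
  simpa [mul_assoc] using conj_mem_closure_singleton (g := g⁻¹) (by simpa using h₂) hy

theorem normal_closure_singleton_of_conj_mem {S : Set G} (hS : closure S = ⊤) {x : G}
    (h : ∀ s ∈ S, s * x * s⁻¹ ∈ closure {x} ∧ s⁻¹ * x * s ∈ closure {x}) :
    (closure {x}).Normal := by
  rw [← normalizer_eq_top_iff, eq_top_iff, ← hS, closure_le]
  exact fun s hs => mem_normalizer_closure_singleton (h s hs).1 (h s hs).2

theorem commutator_le_of_commutatorElement_mem {S : Set G} (hS : closure S = ⊤)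
    {N : Subgroup G} [N.Normal] (h : ∀ s ∈ S, ∀ t ∈ S, ⁅s, t⁆ ∈ N) : _root_.commutator G ≤ N := by
  rw [← Normal.quotient_commutative_iff_commutator_le]
  set k := (QuotientGroup.mk' N) '' S
  have hk : closure k = ⊤ := by
    rw [← MonoidHom.map_closure, hS, ← MonoidHom.range_eq_map,
      MonoidHom.range_eq_top.2 (QuotientGroup.mk'_surjective N)]
  have hcomm : ∀ x ∈ k, ∀ y ∈ k, x * y = y * x := by
    rintro _ ⟨s, hs, rfl⟩ _ ⟨t, ht, rfl⟩
    rw [← commutatorElement_eq_one_iff_mul_comm, ← map_commutatorElement,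
      QuotientGroup.mk'_apply, QuotientGroup.eq_one_iff]
    exact h s hs t ht
  have hcent (x : G ⧸ N) : x ∈ Set.centralizer (Set.centralizer k) :=
    closure_le_centralizer_centralizer k (hk ▸ mem_top x)
  exact ⟨⟨fun x y => Set.centralizer_centralizer_comm_of_comm hcomm x (hcent x) y (hcent y)⟩⟩

end Subgroup

section Metacyclic

variable {G : Type*} [Group G] {a b : G} {r : ℕ}

theorem conj_pow_eq_pow_of_conj_eq_pow (h : b * a * b⁻¹ = a ^ r) (j k : ℕ) :
    b ^ j * a ^ k * (b ^ j)⁻¹ = a ^ (k * r ^ j) := by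
  induction j with
  | zero => simp
  | succ j ih =>
    calc b ^ (j + 1) * a ^ k * (b ^ (j + 1))⁻¹ = b * (b ^ j * a ^ k * (b ^ j)⁻¹) * b⁻¹ := by
          rw [pow_succ']; group
      _ = (b * a * b⁻¹) ^ (k * r ^ j) := by rw [ih, conj_pow]
      _ = a ^ (k * r ^ (j + 1)) := by rw [h, ← pow_mul]; congr 1; ring

theorem commutator_eq_closure_pow_of_conj_eq_pow {m : ℕ} (hgen : closure {a, b} = ⊤)
    (hm : 0 < m) (hbm : b ^ m = 1) (hr : 0 < r) (h : b * a * b⁻¹ = a ^ r) :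
    commutator G = closure {a ^ (r - 1)} := by
  set x := a ^ (r - 1)
  have hba : ⁅b, a⁆ = x := by
    rw [commutatorElement_def, h, ← pow_sub_one_mul hr.ne', mul_inv_cancel_right]
  have hconj (j : ℕ) : b ^ j * x * (b ^ j)⁻¹ ∈ closure {x} := by
    rw [conj_pow_eq_pow_of_conj_eq_pow h, pow_mul]
    exact pow_mem (mem_closure_singleton_self x) _
  have hb_inv : b⁻¹ = b ^ (m - 1) :=
    inv_eq_of_mul_eq_one_right (by rw [← pow_succ', Nat.sub_add_cancel hm, hbm])
  have : (closure {x}).Normal := by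
    refine normal_closure_singleton_of_conj_mem hgen ?_
    simp only [Set.mem_insert_iff, Set.mem_singleton_iff, forall_eq_or_imp, forall_eq]
    refine ⟨⟨?_, ?_⟩, ?_, ?_⟩
    · rw [(Commute.self_pow a _).eq, mul_inv_cancel_right]
      exact mem_closure_singleton_self x
    · rw [(Commute.self_pow a _).inv_left.eq, inv_mul_cancel_right]
      exact mem_closure_singleton_self x
    · simpa using hconj 1
    · simpa [← hb_inv] using hconj (m - 1)
  refine le_antisymm (commutator_le_of_commutatorElement_mem hgen ?_) ?_
  · simp only [Set.mem_insert_iff, Set.mem_singleton_iff, forall_eq_or_imp, forall_eq,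
      commutatorElement_self, one_mem, true_and, and_true]
    refine ⟨?_, hba ▸ mem_closure_singleton_self x⟩
    rw [← commutatorElement_inv, hba]
    exact inv_mem (mem_closure_singleton_self x)
  · rw [closure_le, Set.singleton_subset_iff, ← hba, commutator_def]
    exact commutator_mem_commutator (mem_top b) (mem_top a)

end Metacyclic

theorem closure_lamAlpha_lamBeta (n m r : ℕ) :
    Subgroup.closure {lamAlpha n m r, lamBeta n m r} = ⊤ := by
  rw [← PresentedGroup.closure_range_of]
  congr 1
  ext g
  simp [Fin.exists_fin_two, lamAlpha, lamBeta, eq_comm]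

theorem lamBeta_pow (n m r : ℕ) : lamBeta n m r ^ m = 1 := by
  have := PresentedGroup.one_of_mem (rels := metacyclicRels n m r)
    (Set.mem_insert_of_mem _ (Set.mem_insert _ _))
  rwa [map_pow] at this

theorem lamBeta_mul_lamAlpha_mul_inv (n m r : ℕ) :
    lamBeta n m r * lamAlpha n m r * (lamBeta n m r)⁻¹ = lamAlpha n m r ^ r := by
  have := PresentedGroup.one_of_mem (rels := metacyclicRels n m r)
    (Set.mem_insert_of_mem _ (Set.mem_insert_of_mem _ rfl))
  rwa [map_mul, map_mul, map_inv, map_inv, map_mul, map_pow, mul_inv_eq_one] at this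

theorem stmt4_general (n m r : ℕ) (hm : 0 < m) (hr : 0 < r) :
    commutator (Lam n m r) = Subgroup.closure {(lamAlpha n m r) ^ (r - 1)} :=
  commutator_eq_closure_pow_of_conj_eq_pow (closure_lamAlpha_lamBeta n m r) hm
    (lamBeta_pow n m r) hr (lamBeta_mul_lamAlpha_mul_inv n m r)

theorem stmt4 (n m r : ℕ) (hn : 0 < n) (hm : 0 < m) (hr : 0 < r)
    (hrm : r ^ m ≡ 1 [MOD n]) :
    commutator (Lam n m r) = Subgroup.closure {(lamAlpha n m r) ^ (r - 1)} :=
  stmt4_general n m r hm hr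
end

section
/- Let φ be a skew-morphism of Γ with power function π valued in {1, t}, where Γ⁺ = ker π is a subgroup invariant under φ. If Ξ ≤ Γ⁺ is a normal subgroup of Γ invariant under φ, then the induced map φ̄ : Γ/Ξ → Γ/Ξ, ηΞ ↦ φ(η)Ξ, is well defined and is a skew-morphism of Γ/Ξ with induced power function π̄ valued in {1, t}. -/
/-- A skew-morphism of a group `Γ`: a bijection `φ` fixing `1`, with a power
function `π`, such that `φ(ημ) = φ(η)·φ^{π(η)}(μ)` for all `η, μ`. -/
structure SkewMorphism (Γ : Type*) [Group Γ] where
  toFun : Γ → Γ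
  bijective : Function.Bijective toFun
  map_one : toFun 1 = 1
  π : Γ → ℕ
  skew : ∀ η μ : Γ, toFun (η * μ) = toFun η * toFun^[π η] μ

theorem stmt14 (Γ : Type*) [Group Γ] [Fintype Γ] (φ : SkewMorphism Γ) (t : ℕ)
    (hπ : ∀ η : Γ, φ.π η = 1 ∨ φ.π η = t)
    (H : Subgroup Γ) (hH : (H : Set Γ) = {η : Γ | φ.π η = 1})
    (e : H ≃* H) (he : ∀ h : H, (e h : Γ) = φ.toFun h)
    (Ξ : Subgroup Γ) [Ξ.Normal] (hΞH : Ξ ≤ H)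
    (hφΞ : φ.toFun '' (Ξ : Set Γ) = (Ξ : Set Γ)) :
    ∃ ψ : SkewMorphism (Γ ⧸ Ξ),
      (∀ η : Γ, ψ.toFun ((η : Γ ⧸ Ξ)) = ((φ.toFun η : Γ) : Γ ⧸ Ξ)) ∧
      (∀ x : Γ ⧸ Ξ, ψ.π x = 1 ∨ ψ.π x = t) := by
  -- φ maps Ξ into Ξ
  have hmem : ∀ ξ ∈ Ξ, φ.toFun ξ ∈ Ξ := by
    intro ξ hξ
    have : φ.toFun ξ ∈ φ.toFun '' (Ξ : Set Γ) := ⟨ξ, hξ, rfl⟩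
    rwa [hφΞ] at this
  have hiter : ∀ (k : ℕ) (ξ : Γ), ξ ∈ Ξ → φ.toFun^[k] ξ ∈ Ξ := by
    intro k
    induction k with
    | zero => intro ξ hξ; simpa using hξ
    | succ n ih =>
      intro ξ hξ
      rw [Function.iterate_succ_apply]
      exact ih _ (hmem ξ hξ)
  -- descent
  have hdesc : ∀ (η ξ : Γ), ξ ∈ Ξ →
      ((φ.toFun (η * ξ) : Γ) : Γ ⧸ Ξ) = ((φ.toFun η : Γ) : Γ ⧸ Ξ) := by
    intro η ξ hξ
    rw [φ.skew]
    rw [QuotientGroup.eq]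
    simpa using Ξ.inv_mem (hiter _ _ hξ)
  let f : Γ ⧸ Ξ → Γ ⧸ Ξ := Quotient.lift (fun η => ((φ.toFun η : Γ) : Γ ⧸ Ξ))
    (by
      intro a b hab
      have h : a⁻¹ * b ∈ Ξ := (QuotientGroup.leftRel_apply).mp hab
      have : b = a * (a⁻¹ * b) := by group
      rw [this]
      exact (hdesc a _ h).symm)
  have hf : ∀ η : Γ, f ((η : Γ ⧸ Ξ)) = ((φ.toFun η : Γ) : Γ ⧸ Ξ) := fun η => rfl
  have hfk : ∀ (k : ℕ) (η : Γ), f^[k] ((η : Γ ⧸ Ξ)) = ((φ.toFun^[k] η : Γ) : Γ ⧸ Ξ) := by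
    intro k
    induction k with
    | zero => intro η; rfl
    | succ n ih =>
      intro η
      rw [Function.iterate_succ_apply, Function.iterate_succ_apply, hf, ih]
  have hsurj : Function.Surjective f := by
    intro y
    obtain ⟨g, rfl⟩ := QuotientGroup.mk_surjective y
    obtain ⟨g', rfl⟩ := φ.bijective.surjective g
    exact ⟨(g' : Γ ⧸ Ξ), hf g'⟩
  have hbij : Function.Bijective f := Finite.surjective_iff_bijective.mp hsurj
  refine ⟨⟨f, hbij, ?_, fun x => φ.π x.out, ?_⟩, fun η => hf η, fun x => hπ x.out⟩
  · have : ((1 : Γ) : Γ ⧸ Ξ) = (1 : Γ ⧸ Ξ) := rfl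
    rw [← this, hf, φ.map_one]
  · intro x y
    conv_lhs => rw [← QuotientGroup.out_eq' x, ← QuotientGroup.out_eq' y]
    conv_rhs => rw [← QuotientGroup.out_eq' x, ← QuotientGroup.out_eq' y]
    rw [← QuotientGroup.mk_mul, hf, hfk, hf, φ.skew, QuotientGroup.mk_mul]
    simp only [QuotientGroup.out_eq']
end

section
/- Let a, c be integers with 2 ≤ c and 2c ≥ a, and let r = 1 + 2^c. Then for all integers y, u ≥ 0 with 2·(deg₂(y) + c) ≥ a, one has r^{yu} ≡ 1 + (r−1)·y·u (mod 2^a), where deg₂ denotes the 2-adic valuation. -/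
theorem stmt15 (a c : ℕ) (hc : 2 ≤ c) (hac : a ≤ 2 * c) (r : ℤ) (hr : r = 1 + 2 ^ c)
    (y u : ℕ) (hy : y = 0 ∨ a ≤ 2 * (padicValNat 2 y + c)) :
    r ^ (y * u) ≡ 1 + (r - 1) * y * u [ZMOD 2 ^ a] := by
  subst hr
  have h2 : ((2:ℤ)^c * 2^c) ≡ 0 [ZMOD 2^a] := by
    have hdvd : (2:ℤ)^a ∣ 2^c * 2^c := by
      rw [← pow_add]
      exact pow_dvd_pow 2 (by omega)
    exact (Int.modEq_zero_iff_dvd).2 hdvd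
  have key : ∀ n : ℕ, (1 + 2^c : ℤ)^n ≡ 1 + 2^c * n [ZMOD 2^a] := by
    intro n
    induction n with
    | zero => simp
    | succ n ih =>
      have := ih.mul_right (1 + 2^c)
      calc (1 + 2^c : ℤ)^(n+1) = (1 + 2^c)^n * (1 + 2^c) := by ring
        _ ≡ (1 + 2^c * n) * (1 + 2^c) [ZMOD 2^a] := this
        _ = 1 + 2^c * (n+1) + (2^c * 2^c) * n := by push_cast; ring
        _ ≡ 1 + 2^c * (n+1) + 0 * n [ZMOD 2^a] := (h2.mul_right n).add_left _
        _ = 1 + 2^c * ((n:ℤ)+1) := by ring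
        _ = 1 + 2^c * ((n+1 : ℕ) : ℤ) := by push_cast; ring
  have := key (y * u)
  calc (1 + 2^c : ℤ)^(y*u) ≡ 1 + 2^c * (y*u : ℕ) [ZMOD 2^a] := this
    _ = 1 + (1 + 2^c - 1) * y * u := by push_cast; ring
end

section
/- Let c ≥ 2, a ≤ 2c, r = 1 + 2^c, and let x, y' be nonnegative integers with 2(deg₂(y') + c) ≥ a. Then [x]_{r^{y'}} := ∑_{i=0}^{x−1} r^{i·y'} ≡ x + 2^{c−1}·y'·x·(x−1) (mod 2^a). -/
theorem stmt16 (a c : ℕ) (hc : 2 ≤ c) (hac : a ≤ 2 * c) (r : ℤ) (hr : r = 1 + 2 ^ c)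
    (x y' : ℕ) (hy : y' = 0 ∨ a ≤ 2 * (padicValNat 2 y' + c)) :
    (∑ i ∈ Finset.range x, (r ^ y') ^ i)
      ≡ x + 2 ^ (c - 1) * y' * x * (x - 1) [ZMOD 2 ^ a] := by
  have hexp : (2:ℤ)^c = 2 * 2^(c-1) := by
    have h1 : c - 1 + 1 = c := by omega
    have := pow_succ' (2:ℤ) (c-1)
    rw [h1] at this
    exact this
  have key : ∀ n : ℕ, r^n ≡ 1 + 2^c * n [ZMOD 2^a] := by
    intro n
    have h2 : ((2:ℤ)^a) ∣ 2^(2*c) := pow_dvd_pow 2 hac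
    have main : r^n ≡ 1 + 2^c * n [ZMOD 2^(2*c)] := by
      induction n with
      | zero => simp
      | succ n ih =>
        have h3 : r^(n+1) = r^n * r := pow_succ r n
        have h4 := ih.mul_right r
        rw [h3]
        refine h4.trans ?_
        have h5 : (1 + 2^c * (n:ℤ)) * r = 1 + 2^c * ((n:ℤ)+1) + 2^(2*c) * n := by
          rw [hr]; ring
        rw [h5]
        push_cast
        have hz : (2:ℤ)^(2*c) * n ≡ 0 [ZMOD 2^(2*c)] :=
          Int.modEq_zero_iff_dvd.mpr (Dvd.intro _ rfl)
        simpa using (Int.ModEq.add_left (1 + 2^c * ((n:ℤ)+1)) hz)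
    exact main.of_dvd h2
  induction x with
  | zero => simp
  | succ x ih =>
    rw [Finset.sum_range_succ]
    have h6 : (r ^ y') ^ x = r ^ (y' * x) := by rw [pow_mul]
    have h7 := key (y' * x)
    rw [h6]
    have h8 := ih.add h7
    refine h8.trans ?_
    have h9 : ((x:ℤ) + 2 ^ (c - 1) * y' * x * (x - 1)) + (1 + 2^c * (y' * x : ℕ)) =
        ((x:ℕ)+1 : ℤ) + 2 ^ (c - 1) * y' * ((x:ℕ)+1 : ℤ) * (((x:ℕ)+1 : ℤ) - 1) := by
      push_cast
      rw [hexp]; ring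
    rw [h9]
    push_cast
    exact Int.ModEq.refl _
end

section
/- Let b, c be positive integers with b ≤ c, z, w integers with z + w ≡ 0 (mod 2^b), w² ≡ 1 (mod 2^b), and w ≡ 1 (mod 4). If z² ≡ 1 (mod 2^{c−1}) then z ≡ −1 (mod 2^{c−2}) and w ≡ 1 (mod 2^{b−1}). -/
lemma aux17 (n : ℕ) (x : ℤ) (h : (2:ℤ)^(n+2) ∣ (x-1)*(x+1)) :
    (2:ℤ)^(n+1) ∣ x - 1 ∨ (2:ℤ)^(n+1) ∣ x + 1 := by
  have h4 : (4:ℤ) ∣ (x-1)*(x+1) := by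
    have := pow_dvd_pow (2:ℤ) (show 2 ≤ n+2 by omega)
    exact dvd_trans (by norm_num at this ⊢; exact this) h
  have hx : x % 2 = 1 := by
    rcases Int.even_or_odd x with ⟨k, hk⟩ | ⟨k, hk⟩
    · exfalso
      have he : (x-1)*(x+1) = 4*(k*k) - 1 := by rw [hk]; ring
      rcases h4 with ⟨m, hm⟩
      omega
    · omega
  obtain ⟨u, hu⟩ : ∃ u, x = 2*u + 1 := ⟨x / 2, by omega⟩
  have h' : (2:ℤ)^n ∣ u * (u+1) := by
    rcases h with ⟨m, hm⟩
    refine ⟨m, ?_⟩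
    have key : (4:ℤ) * (u * (u+1)) = 4 * (2^n * m) := by
      have h1 : (x-1)*(x+1) = 4 * (u*(u+1)) := by rw [hu]; ring
      have h2 : (2:ℤ)^(n+2) = 4 * 2^n := by ring
      rw [h1, h2] at hm
      linarith [hm]
    exact mul_left_cancel₀ (by norm_num : (4:ℤ) ≠ 0) key
  rcases Int.even_or_odd u with ⟨k, hk⟩ | ⟨k, hk⟩
  · left
    have hodd : ¬ (2:ℤ) ∣ (u+1) := by omega
    obtain ⟨m, hm⟩ := (Int.prime_two).pow_dvd_of_dvd_mul_right n hodd h'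
    exact ⟨m, by rw [hu, pow_succ]; linarith⟩
  · right
    have hodd : ¬ (2:ℤ) ∣ u := by omega
    have h'' : (2:ℤ)^n ∣ (u+1) * u := by rwa [mul_comm]
    obtain ⟨m, hm⟩ := (Int.prime_two).pow_dvd_of_dvd_mul_right n hodd h''
    exact ⟨m, by rw [hu, pow_succ]; linarith⟩

theorem stmt17 (b c : ℕ) (hb : 2 ≤ b) (hbc : b ≤ c) (hc : 4 ≤ c) (z w : ℤ)
    (h1 : z + w ≡ 0 [ZMOD 2 ^ b]) (h2 : w ^ 2 ≡ 1 [ZMOD 2 ^ b])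
    (h3 : w ≡ 1 [ZMOD 4]) (h4 : z ^ 2 ≡ 1 [ZMOD 2 ^ (c - 1)]) :
    z ≡ -1 [ZMOD 2 ^ (c - 2)] ∧ w ≡ 1 [ZMOD 2 ^ (b - 1)] := by
  have hw4 : (4:ℤ) ∣ 1 - w := Int.ModEq.dvd h3
  have hzw : (2:ℤ)^b ∣ z + w := by
    have := Int.ModEq.dvd h1
    have h0 : (0:ℤ) - (z + w) = -(z+w) := by ring
    rw [h0] at this
    exact dvd_neg.mp this
  have h4b : (4:ℤ) ∣ (2:ℤ)^b := by
    have := pow_dvd_pow (2:ℤ) hb; norm_num at this; exact this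
  have hz4 : (4:ℤ) ∣ z + 1 := by
    have h1' : (4:ℤ) ∣ z + w := dvd_trans h4b hzw
    have hs : (4:ℤ) ∣ (z + w) + (1 - w) := dvd_add h1' hw4
    have he : (z + w) + (1 - w) = z + 1 := by ring
    rwa [he] at hs
  constructor
  · -- z part
    have hd : (2:ℤ)^(c-1) ∣ (z-1)*(z+1) := by
      have hdd := Int.ModEq.dvd h4
      have he : (1:ℤ) - z^2 = -((z-1)*(z+1)) := by ring
      rw [he] at hdd
      exact dvd_neg.mp hdd
    have hc1 : c - 1 = (c - 3) + 2 := by omega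
    have hc2 : c - 2 = (c - 3) + 1 := by omega
    rw [hc1] at hd
    rcases aux17 (c-3) z hd with hz | hz
    · exfalso
      have h42 : (4:ℤ) ∣ (2:ℤ)^((c-3)+1) := by
        have := pow_dvd_pow (2:ℤ) (show 2 ≤ (c-3)+1 by omega)
        norm_num at this; exact this
      have hz1 : (4:ℤ) ∣ z - 1 := dvd_trans h42 hz
      have hs : (4:ℤ) ∣ (z+1) - (z-1) := dvd_sub hz4 hz1
      have he : (z+1) - (z-1) = 2 := by ring
      rw [he] at hs; norm_num at hs
    · rw [Int.modEq_iff_dvd, hc2]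
      have he : (-1:ℤ) - z = -(z+1) := by ring
      rw [he]; exact dvd_neg.mpr hz
  · -- w part
    have hd : (2:ℤ)^b ∣ (w-1)*(w+1) := by
      have hdd := Int.ModEq.dvd h2
      have he : (1:ℤ) - w^2 = -((w-1)*(w+1)) := by ring
      rw [he] at hdd
      exact dvd_neg.mp hdd
    rcases Nat.lt_or_ge b 3 with hb3 | hb3
    · -- b = 2
      have hbm : b - 1 = 1 := by omega
      rw [Int.modEq_iff_dvd, hbm]
      exact dvd_trans (by norm_num) hw4
    · have hb1 : b = (b - 2) + 2 := by omega
      have hb2 : b - 1 = (b - 2) + 1 := by omega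
      rw [hb1] at hd
      rcases aux17 (b-2) w hd with hw | hw
      · rw [Int.modEq_iff_dvd, hb2]
        have he : (1:ℤ) - w = -(w-1) := by ring
        rw [he]; exact dvd_neg.mpr hw
      · exfalso
        have h42 : (4:ℤ) ∣ (2:ℤ)^((b-2)+1) := by
          have := pow_dvd_pow (2:ℤ) (show 2 ≤ (b-2)+1 by omega)
          norm_num at this; exact this
        have hw1 : (4:ℤ) ∣ w + 1 := dvd_trans h42 hw
        have hs : (4:ℤ) ∣ (w+1) + (1-w) := dvd_add hw1 hw4
        have he : (w+1) + (1-w) = 2 := by ring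
        rw [he] at hs; norm_num at hs
end
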